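/- (Inter-band magnetization density as derivative of the pressure.) Suppose that at the given parameter values the variational functional F has a unique maximizer r_β over [0,∞). Then the map t ↦ p(t), obtained by letting the magnetic inter-band coupling η = t vary with all other parameters held fixed, is differentiable at t = η, and its derivative there equals M := exp(−2βλ)·f(r_β)^{−1}·[ exp(−β·h_s)·sinh(β·(η − h_f)) + exp(β·h_s)·sinh(β·(η + h_f)) ]. -/

import Mathlib

/-!
Danskin's envelope argument; write `F_t` for `F` at `η = t`. Since
`cosh (u + v) ≤ cosh u * exp v` for `v ≥ 0` and `g_{r,x} ≤ g_{0,x} + γ_s √r`, one has `f_t(r) ≤ f_t(0) exp(β γ_s √r)`, hence `F_t(r) < F_t(0)` for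
`r > 1`, uniformly in `t`. So every `F_t` attains its supremum at some `r_t ∈ [0, 1]`.
Joint continuity makes `F_t → F_η` uniformly on `[0, 1]`, and uniqueness of the maximiser forces
`r_t → r_β`. Finally `F_t(r_β) - F_η(r_β) ≤ p(t) - p(η) ≤ F_t(r_t) - F_η(r_t)`, and by the mean
value theorem and continuity of `∂_t F` both bounds are `(t - η) ∂_t F_η(r_β) + o(t - η)`.
-/

open Real Filter

/-- `g_{r,x} := sqrt((x + λ_s − μ_s)² + γ_s²·r)`. -/
noncomputable def gg (gams lams mus r x : ℝ) : ℝ :=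
  Real.sqrt ((x + lams - mus) ^ 2 + gams ^ 2 * r)

/-- The function `f` from Theorem 1 of the paper. Parameters:
`beta` = β, `gams` = γ_s, `lams` = λ_s, `lamf` = λ_f, `lam` = λ,
`mus` = μ_s, `muf` = μ_f, `hs` = h_s, `hf` = h_f, `eta` = η. -/
noncomputable def ff (beta gams lams lamf lam mus muf hs hf eta r : ℝ) : ℝ :=
  (Real.exp (-(beta * muf)) + Real.exp (-(beta * (4 * lam + 2 * lamf - muf))))
      * Real.cosh (beta * hs)
    + Real.exp (-(beta * (2 * lam - hs))) * Real.cosh (beta * (eta + hf))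
    + Real.exp (-(beta * (2 * lam + hs))) * Real.cosh (beta * (eta - hf))
    + Real.exp (-(beta * (lams + muf))) * Real.cosh (beta * gg gams lams mus r 0)
    + Real.exp (-(beta * (4 * lam + lams + 2 * lamf - muf)))
      * Real.cosh (beta * gg gams lams mus r (4 * lam))
    + 2 * Real.exp (-(beta * (2 * lam + lams))) * Real.cosh (beta * hf)
      * Real.cosh (beta * gg gams lams mus r (2 * lam))

/-- The variational functional `F(r) := −γ_s·r + β⁻¹·ln f(r)`. -/
noncomputable def FF (beta gams lams lamf lam mus muf hs hf eta r : ℝ) : ℝ :=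
  -(gams * r) + beta⁻¹ * Real.log (ff beta gams lams lamf lam mus muf hs hf eta r)

/-- The grand-canonical pressure `p = β⁻¹ ln 2 + μ_s + μ_f + sup_{r ≥ 0} F(r)`. -/
noncomputable def pp (beta gams lams lamf lam mus muf hs hf eta : ℝ) : ℝ :=
  beta⁻¹ * Real.log 2 + mus + muf +
    sSup ((fun r => FF beta gams lams lamf lam mus muf hs hf eta r) '' Set.Ici 0)
open Topology Set

theorem hasDerivAt_of_sub_le_sub_le {α : Type*} [TopologicalSpace α] {φ : ℝ → ℝ}
    {F F' : ℝ → α → ℝ} {r : ℝ → α} {a₀ : α} {η : ℝ}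
    (hF : ∀ s a, HasDerivAt (F · a) (F' s a) s)
    (hF' : ContinuousAt (Function.uncurry F') (η, a₀)) (hr : Tendsto r (𝓝 η) (𝓝 a₀))
    (hlower : ∀ᶠ t in 𝓝 η, F t a₀ - F η a₀ ≤ φ t - φ η)
    (hupper : ∀ᶠ t in 𝓝 η, φ t - φ η ≤ F t (r t) - F η (r t)) :
    HasDerivAt φ (F' η a₀) η := by
  rw [hasDerivAt_iff_isLittleO, Asymptotics.isLittleO_iff]
  intro c hc
  obtain ⟨U, hU, V, hV, hUV⟩ := mem_nhds_prod_iff.1 (hF' (Metric.closedBall_mem_nhds _ hc))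
  obtain ⟨δ, hδ, hball⟩ := Metric.mem_nhds_iff.1 hU
  have hincrement : ∀ a ∈ V, ∀ t ∈ Metric.ball η δ,
      |F t a - F η a - (t - η) * F' η a₀| ≤ c * |t - η| := by
    intro a ha t ht
    have hderiv : ∀ s ∈ Metric.ball η δ,
        HasDerivWithinAt (fun s => F s a - s * F' η a₀) (F' s a - F' η a₀) (Metric.ball η δ) s :=
      fun s _ => ((hF s a).fun_sub (hasDerivAt_mul_const (F' η a₀))).hasDerivWithinAt
    have hbound : ∀ s ∈ Metric.ball η δ, ‖F' s a - F' η a₀‖ ≤ c := fun s hs =>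
      mem_closedBall_iff_norm.1 (hUV (mk_mem_prod (hball hs) ha))
    have := (convex_ball η δ).norm_image_sub_le_of_norm_hasDerivWithin_le hderiv hbound
      (Metric.mem_ball_self hδ) ht
    rw [Real.norm_eq_abs, Real.norm_eq_abs] at this
    convert this using 2
    ring
  filter_upwards [hlower, hupper, Metric.ball_mem_nhds η hδ, hr hV] with t hl hu ht hrt
  have h₀ := abs_le.1 (hincrement a₀ (mem_of_mem_nhds hV) t ht)
  have h₁ := abs_le.1 (hincrement (r t) hrt t ht)
  rw [Real.norm_eq_abs, Real.norm_eq_abs, smul_eq_mul, abs_le]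
  constructor <;> linarith [h₀.1, h₀.2, h₁.1, h₁.2]

theorem hasDerivAt_sSup_image_of_isMaxOn {α : Type*} [TopologicalSpace α]
    {F F' : ℝ → α → ℝ} {S : Set α} {r : ℝ → α} {a₀ : α} {η : ℝ}
    (hF : ∀ s a, HasDerivAt (F · a) (F' s a) s)
    (hF' : ContinuousAt (Function.uncurry F') (η, a₀))
    (hrS : ∀ t, r t ∈ S) (hr : ∀ t, IsMaxOn (F t) S (r t))
    (ha₀ : a₀ ∈ S) (ha₀max : IsMaxOn (F η) S a₀) (hlim : Tendsto r (𝓝 η) (𝓝 a₀)) :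
    HasDerivAt (fun t => sSup (F t '' S)) (F' η a₀) η := by
  have hsSup : ∀ t a, a ∈ S → IsMaxOn (F t) S a → sSup (F t '' S) = F t a := fun t a ha hmax =>
    IsGreatest.csSup_eq ⟨mem_image_of_mem _ ha, forall_mem_image.2 fun _ hx => hmax hx⟩
  refine hasDerivAt_of_sub_le_sub_le hF hF' hlim (Eventually.of_forall fun t => ?_)
    (Eventually.of_forall fun t => ?_) <;>
  simp only [hsSup t (r t) (hrS t) (hr t), hsSup η a₀ ha₀ ha₀max]
  · linarith [isMaxOn_iff.1 (hr t) a₀ ha₀]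
  · linarith [isMaxOn_iff.1 ha₀max (r t) (hrS t)]

theorem tendsto_of_isMaxOn_of_tendstoUniformlyOn {ι α : Type*} [TopologicalSpace α]
    {l : Filter ι} {G : ι → α → ℝ} {g : α → ℝ} {K : Set α} {r : ι → α} {a₀ : α}
    (hK : IsCompact K) (hg : ContinuousOn g K) (hG : TendstoUniformlyOn G g l K)
    (ha₀ : a₀ ∈ K) (hstrict : ∀ a ∈ K, a ≠ a₀ → g a < g a₀)
    (hr : ∀ᶠ i in l, r i ∈ K ∧ IsMaxOn (G i) K (r i)) :
    Tendsto r l (𝓝 a₀) := by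
  rw [tendsto_nhds]
  intro U hU ha₀U
  rcases (K \ U).eq_empty_or_nonempty with hempty | hne
  · filter_upwards [hr] with i hi
    by_contra h
    exact hempty.subset ⟨hi.1, h⟩
  obtain ⟨a₁, ha₁, hmax₁⟩ := (hK.diff hU).exists_isMaxOn hne (hg.mono sdiff_subset)
  have hgap : 0 < g a₀ - g a₁ := sub_pos.2 (hstrict a₁ ha₁.1 fun h => ha₁.2 (h ▸ ha₀U))
  filter_upwards [hr, Metric.tendstoUniformlyOn_iff.1 hG _ (half_pos hgap)] with i hi hclose
  by_contra hrU
  have h₀ := abs_lt.1 (Real.dist_eq _ _ ▸ hclose a₀ ha₀)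
  have h₁ := abs_lt.1 (Real.dist_eq _ _ ▸ hclose (r i) hi.1)
  have h₂ : g (r i) ≤ g a₁ := hmax₁ ⟨hi.1, hrU⟩
  have h₃ : G i a₀ ≤ G i (r i) := hi.2 ha₀
  linarith [h₀.1, h₁.2]

theorem Continuous.tendstoUniformlyOn_of_isCompact {α β : Type*} [UniformSpace α]
    [WeaklyLocallyCompactSpace α] [UniformSpace β] {G : α → β → ℝ}
    (hG : Continuous (Function.uncurry G)) {K : Set β} (hK : IsCompact K) (x : α) :
    TendstoUniformlyOn G (G x) (𝓝 x) K := by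
  obtain ⟨C, hC, hxC⟩ := exists_compact_mem_nhds x
  have := (IsCompact.uniformContinuousOn_of_continuous (hC.prod hK)
    hG.continuousOn).tendstoUniformlyOn (mem_of_mem_nhds hxC)
  rwa [nhdsWithin_eq_nhds.2 hxC] at this

theorem Real.cosh_add_le_cosh_mul_exp (x : ℝ) {y : ℝ} (hy : 0 ≤ y) :
    Real.cosh (x + y) ≤ Real.cosh x * Real.exp y := by
  rw [Real.cosh_add, ← Real.cosh_add_sinh y, mul_add]
  gcongr
  exact (Real.sinh_lt_cosh x).le

theorem gg_le_gg_zero_add {gams : ℝ} (hgams : 0 ≤ gams) (lams mus : ℝ) {r : ℝ} (hr : 0 ≤ r)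
    (x : ℝ) : gg gams lams mus r x ≤ gg gams lams mus 0 x + gams * Real.sqrt r := by
  unfold gg
  rw [mul_zero, add_zero, Real.sqrt_sq_eq_abs, Real.sqrt_le_left (by positivity)]
  nlinarith [sq_abs (x + lams - mus), Real.sq_sqrt hr, abs_nonneg (x + lams - mus),
    mul_nonneg hgams (Real.sqrt_nonneg r)]

theorem cosh_mul_gg_le {beta gams : ℝ} (hbeta : 0 ≤ beta) (hgams : 0 ≤ gams) (lams mus : ℝ)
    {r : ℝ} (hr : 0 ≤ r) (x : ℝ) :
    Real.cosh (beta * gg gams lams mus r x)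
      ≤ Real.cosh (beta * gg gams lams mus 0 x) * Real.exp (beta * (gams * Real.sqrt r)) := by
  calc Real.cosh (beta * gg gams lams mus r x)
      ≤ Real.cosh (beta * gg gams lams mus 0 x + beta * (gams * Real.sqrt r)) := by
        rw [Real.cosh_le_cosh, abs_of_nonneg (by unfold gg; positivity),
          abs_of_nonneg (by unfold gg; positivity), ← mul_add]
        exact mul_le_mul_of_nonneg_left (gg_le_gg_zero_add hgams lams mus hr x) hbeta
    _ ≤ _ := Real.cosh_add_le_cosh_mul_exp _ (by positivity)

theorem ff_le_ff_zero_mul_exp {beta gams : ℝ} (hbeta : 0 ≤ beta) (hgams : 0 ≤ gams)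
    (lams lamf lam mus muf hs hf eta : ℝ) {r : ℝ} (hr : 0 ≤ r) :
    ff beta gams lams lamf lam mus muf hs hf eta r
      ≤ ff beta gams lams lamf lam mus muf hs hf eta 0
        * Real.exp (beta * (gams * Real.sqrt r)) := by
  have hE : 1 ≤ Real.exp (beta * (gams * Real.sqrt r)) := Real.one_le_exp (by positivity)
  have hcosh := cosh_mul_gg_le hbeta hgams lams mus hr
  have hscale : ∀ {c : ℝ}, 0 ≤ c → c ≤ c * Real.exp (beta * (gams * Real.sqrt r)) :=
    fun hc => le_mul_of_one_le_right hc hE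
  unfold ff
  linarith [hscale (by positivity : 0 ≤ (Real.exp (-(beta * muf))
      + Real.exp (-(beta * (4 * lam + 2 * lamf - muf)))) * Real.cosh (beta * hs)),
    hscale (by positivity :
      0 ≤ Real.exp (-(beta * (2 * lam - hs))) * Real.cosh (beta * (eta + hf))),
    hscale (by positivity :
      0 ≤ Real.exp (-(beta * (2 * lam + hs))) * Real.cosh (beta * (eta - hf))),
    mul_le_mul_of_nonneg_left (hcosh 0) (Real.exp_pos (-(beta * (lams + muf)))).le,
    mul_le_mul_of_nonneg_left (hcosh (4 * lam))
      (Real.exp_pos (-(beta * (4 * lam + lams + 2 * lamf - muf)))).le,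
    mul_le_mul_of_nonneg_left (hcosh (2 * lam))
      (by positivity : 0 ≤ 2 * Real.exp (-(beta * (2 * lam + lams))) * Real.cosh (beta * hf))]

theorem ff_pos (beta gams lams lamf lam mus muf hs hf eta r : ℝ) :
    0 < ff beta gams lams lamf lam mus muf hs hf eta r := by
  unfold ff; positivity

theorem FF_lt_FF_zero {beta gams : ℝ} (hbeta : 0 < beta) (hgams : 0 < gams)
    (lams lamf lam mus muf hs hf eta : ℝ) {r : ℝ} (hr : 1 < r) :
    FF beta gams lams lamf lam mus muf hs hf eta r
      < FF beta gams lams lamf lam mus muf hs hf eta 0 := by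
  have hlog : Real.log (ff beta gams lams lamf lam mus muf hs hf eta r)
      ≤ Real.log (ff beta gams lams lamf lam mus muf hs hf eta 0)
        + beta * (gams * Real.sqrt r) := by
    rw [← Real.log_exp (beta * (gams * Real.sqrt r)),
      ← Real.log_mul (ff_pos ..).ne' (Real.exp_pos _).ne']
    exact Real.log_le_log (ff_pos ..)
      (ff_le_ff_zero_mul_exp hbeta.le hgams.le _ _ _ _ _ _ _ _ (by linarith))
  have hsqrt : gams * Real.sqrt r < gams * r :=
    mul_lt_mul_of_pos_left (Real.sqrt_lt_self_iff.2 hr) hgams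
  have hlog' := mul_le_mul_of_nonneg_left hlog (inv_nonneg.2 hbeta.le)
  rw [mul_add, ← mul_assoc, inv_mul_cancel₀ hbeta.ne', one_mul] at hlog'
  unfold FF
  linarith

theorem continuous_ff (beta gams lams lamf lam mus muf hs hf : ℝ) :
    Continuous (Function.uncurry (ff beta gams lams lamf lam mus muf hs hf)) := by
  unfold ff gg; fun_prop

theorem continuous_FF (beta gams lams lamf lam mus muf hs hf : ℝ) :
    Continuous (Function.uncurry (FF beta gams lams lamf lam mus muf hs hf)) := by
  have hff := continuous_ff beta gams lams lamf lam mus muf hs hf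
  exact (continuous_const.mul continuous_snd).neg.add
    (continuous_const.mul (hff.log fun _ => (ff_pos ..).ne'))

theorem exists_mem_Icc_isMaxOn_FF {beta gams : ℝ} (hbeta : 0 < beta) (hgams : 0 < gams)
    (lams lamf lam mus muf hs hf eta : ℝ) :
    ∃ r ∈ Icc (0 : ℝ) 1, IsMaxOn (FF beta gams lams lamf lam mus muf hs hf eta) (Ici 0) r := by
  obtain ⟨r, hr, hrmax⟩ := isCompact_Icc.exists_isMaxOn (nonempty_Icc.2 zero_le_one)
    ((continuous_FF ..).uncurry_left eta).continuousOn
  refine ⟨r, hr, fun a (ha : 0 ≤ a) => ?_⟩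
  rcases le_or_gt a 1 with ha1 | ha1
  · exact hrmax ⟨ha, ha1⟩
  · exact ((FF_lt_FF_zero hbeta hgams _ _ _ _ _ _ _ _ ha1).trans_le
      (hrmax ⟨le_rfl, zero_le_one⟩)).le

theorem hasDerivAt_ff_eta (beta gams lams lamf lam mus muf hs hf r eta : ℝ) :
    HasDerivAt (fun t => ff beta gams lams lamf lam mus muf hs hf t r)
      (beta * Real.exp (-(2 * beta * lam))
        * (Real.exp (-(beta * hs)) * Real.sinh (beta * (eta - hf))
          + Real.exp (beta * hs) * Real.sinh (beta * (eta + hf)))) eta := by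
  have hcosh : ∀ s, HasDerivAt (fun t => Real.cosh (beta * (t + s)))
      (Real.sinh (beta * (eta + s)) * beta) eta := fun s => by
    simpa using (((hasDerivAt_id eta).add_const s).const_mul beta).cosh
  have hsum := (((((hasDerivAt_const eta ((Real.exp (-(beta * muf))
      + Real.exp (-(beta * (4 * lam + 2 * lamf - muf)))) * Real.cosh (beta * hs))).add
    ((hcosh hf).const_mul (Real.exp (-(beta * (2 * lam - hs)))))).add
    ((hcosh (-hf)).const_mul (Real.exp (-(beta * (2 * lam + hs)))))).add_const
    (Real.exp (-(beta * (lams + muf))) * Real.cosh (beta * gg gams lams mus r 0))).add_const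
    (Real.exp (-(beta * (4 * lam + lams + 2 * lamf - muf)))
      * Real.cosh (beta * gg gams lams mus r (4 * lam)))).add_const
    (2 * Real.exp (-(beta * (2 * lam + lams))) * Real.cosh (beta * hf)
      * Real.cosh (beta * gg gams lams mus r (2 * lam)))
  have hsplit : ∀ u, Real.exp (-(beta * (2 * lam + u)))
      = Real.exp (-(2 * beta * lam)) * Real.exp (-(beta * u)) := fun u => by
    rw [← Real.exp_add]; ring_nf
  refine hsum.congr_deriv ?_
  rw [hsplit hs, sub_eq_add_neg (2 * lam), hsplit (-hs), mul_neg, neg_neg, sub_eq_add_neg eta]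
  ring

theorem hasDerivAt_FF_eta {beta : ℝ} (hbeta : beta ≠ 0)
    (gams lams lamf lam mus muf hs hf r eta : ℝ) :
    HasDerivAt (fun t => FF beta gams lams lamf lam mus muf hs hf t r)
      (Real.exp (-(2 * beta * lam)) * (ff beta gams lams lamf lam mus muf hs hf eta r)⁻¹ *
        (Real.exp (-(beta * hs)) * Real.sinh (beta * (eta - hf))
          + Real.exp (beta * hs) * Real.sinh (beta * (eta + hf)))) eta := by
  refine ((((hasDerivAt_ff_eta beta gams lams lamf lam mus muf hs hf r eta).log
    (ff_pos ..).ne').const_mul beta⁻¹).const_add (-(gams * r))).congr_deriv ?_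
  field_simp

theorem pressure_deriv_eta_general (beta gams lams lamf lam mus muf hs hf eta : ℝ) (hbeta : 0 < beta) (hgams : 0 < gams)
    (rb : ℝ) (hrb : 0 ≤ rb) (hmax : ∀ r' : ℝ, 0 ≤ r' → FF beta gams lams lamf lam mus muf hs hf eta r' ≤ FF beta gams lams lamf lam mus muf hs hf eta rb)
    (huniq : ∀ r : ℝ, 0 ≤ r → (∀ r' : ℝ, 0 ≤ r' → FF beta gams lams lamf lam mus muf hs hf eta r' ≤ FF beta gams lams lamf lam mus muf hs hf eta r) → r = rb) :
    HasDerivAt (fun t => pp beta gams lams lamf lam mus muf hs hf t)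
      (Real.exp (-(2 * beta * lam)) * (ff beta gams lams lamf lam mus muf hs hf eta rb)⁻¹ *
        (Real.exp (-(beta * hs)) * Real.sinh (beta * (eta - hf))
          + Real.exp (beta * hs) * Real.sinh (beta * (eta + hf)))) eta := by
  set F := FF beta gams lams lamf lam mus muf hs hf
  choose r hrK hrmax using exists_mem_Icc_isMaxOn_FF hbeta hgams lams lamf lam mus muf hs hf
  have hrbK : rb ∈ Icc (0 : ℝ) 1 :=
    ⟨hrb, not_lt.1 fun h => (FF_lt_FF_zero hbeta hgams _ _ _ _ _ _ _ _ h).not_ge (hmax 0 le_rfl)⟩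
  have hstrict : ∀ a ∈ Icc (0 : ℝ) 1, a ≠ rb → F eta a < F eta rb := fun a ha hne =>
    (hmax a ha.1).lt_of_ne fun h => hne (huniq a ha.1 fun r' hr' => h ▸ hmax r' hr')
  have hlim : Tendsto r (𝓝 eta) (𝓝 rb) :=
    tendsto_of_isMaxOn_of_tendstoUniformlyOn isCompact_Icc
      ((continuous_FF ..).uncurry_left eta).continuousOn
      ((continuous_FF ..).tendstoUniformlyOn_of_isCompact isCompact_Icc eta) hrbK hstrict
      (Eventually.of_forall fun t => ⟨hrK t, (hrmax t).on_subset Icc_subset_Ici_self⟩)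
  have hderiv_cont : Continuous (Function.uncurry fun s a =>
      Real.exp (-(2 * beta * lam)) * (ff beta gams lams lamf lam mus muf hs hf s a)⁻¹ *
        (Real.exp (-(beta * hs)) * Real.sinh (beta * (s - hf))
          + Real.exp (beta * hs) * Real.sinh (beta * (s + hf)))) :=
    (continuous_const.mul ((continuous_ff ..).inv₀ fun _ => (ff_pos ..).ne')).mul (by fun_prop)
  exact (hasDerivAt_sSup_image_of_isMaxOn
    (fun s a => hasDerivAt_FF_eta hbeta.ne' gams lams lamf lam mus muf hs hf a s)
    hderiv_cont.continuousAt (fun t => (hrK t).1) hrmax hrb hmax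
    hlim).const_add _

/-- inter-band magnetization density as derivative of the pressure:
if `F` has a unique maximizer `rb` over `[0,∞)`, then `t ↦ p(t)` (varying `η`) is
differentiable at `η` with derivative `M`. -/
theorem pressure_deriv_eta (beta gams lams lamf lam mus muf hs hf eta : ℝ) (hbeta : 0 < beta) (hgams : 0 < gams) (hlams : 0 ≤ lams) (hlamf : 0 ≤ lamf) (hlam : 0 ≤ lam)
    (rb : ℝ) (hrb : 0 ≤ rb) (hmax : ∀ r' : ℝ, 0 ≤ r' → FF beta gams lams lamf lam mus muf hs hf eta r' ≤ FF beta gams lams lamf lam mus muf hs hf eta rb)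
    (huniq : ∀ r : ℝ, 0 ≤ r → (∀ r' : ℝ, 0 ≤ r' → FF beta gams lams lamf lam mus muf hs hf eta r' ≤ FF beta gams lams lamf lam mus muf hs hf eta r) → r = rb) :
    HasDerivAt (fun t => pp beta gams lams lamf lam mus muf hs hf t)
      (Real.exp (-(2 * beta * lam)) * (ff beta gams lams lamf lam mus muf hs hf eta rb)⁻¹ *
        (Real.exp (-(beta * hs)) * Real.sinh (beta * (eta - hf))
          + Real.exp (beta * hs) * Real.sinh (beta * (eta + hf)))) eta :=
  pressure_deriv_eta_general beta gams lams lamf lam mus muf hs hf eta hbeta hgams rb hrb hmax huniq
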